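/- arXiv:2009.05031 — 6 statements merged into one kernel-verified Lean document; each statement's English description precedes it below -/
import Mathlib

section
/- Let ω ∈ ℝ and let r, S : I → ℝ be differentiable functions on an interval I ⊆ ℝ satisfying r'·S + r·(1 + ω²r²)·S' = 0 on I. Then the function s ↦ ω·r(s)·S(s)/√(1 + ω²r(s)²) is constant on I. -/
/-!
Writing `q = 1 + ω²r²`, the quotient rule gives
`(ω r S / √q)' = ω (r' S + r q S') / q^{3/2}`,
so the quantity is stationary exactly when the ODE holds, and a function with vanishing
derivative on a convex set is constant there.
-/

open Real

noncomputable def rotationConstant (ω : ℝ) (r S : ℝ → ℝ) (s : ℝ) : ℝ :=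
  ω * r s * S s / √(1 + ω ^ 2 * r s ^ 2)

theorem hasDerivAt_rotationConstant {ω r' S' x : ℝ} {r S : ℝ → ℝ}
    (hr : HasDerivAt r r' x) (hS : HasDerivAt S S' x) :
    HasDerivAt (rotationConstant ω r S)
      (ω * (r' * S x + r x * (1 + ω ^ 2 * r x ^ 2) * S') / √(1 + ω ^ 2 * r x ^ 2) ^ 3) x := by
  have hq_pos : 0 < 1 + ω ^ 2 * r x ^ 2 := by positivity
  have hsqrt_pos : 0 < √(1 + ω ^ 2 * r x ^ 2) := sqrt_pos.mpr hq_pos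
  have hsqrt_sq : √(1 + ω ^ 2 * r x ^ 2) ^ 2 = 1 + ω ^ 2 * r x ^ 2 := sq_sqrt hq_pos.le
  have hq : HasDerivAt (fun s => 1 + ω ^ 2 * r s ^ 2) (ω ^ 2 * (2 * r x * r')) x := by
    simpa using ((hr.pow 2).const_mul (ω ^ 2)).const_add 1
  have hnum : HasDerivAt (fun s => ω * r s * S s) (ω * r' * S x + ω * r x * S') x := by
    simpa [mul_assoc] using (hr.const_mul ω).fun_mul hS
  refine (hnum.fun_div (hq.sqrt hq_pos.ne') hsqrt_pos.ne').congr_deriv ?_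
  set u := √(1 + ω ^ 2 * r x ^ 2)
  field_simp
  linear_combination (ω * r' * S x + ω * r x * S') * hsqrt_sq

/-- The conservation law: if `r'·S + r·(1 + ω²r²)·S' = 0` on an interval `I`,
then `s ↦ ω·r(s)·S(s)/√(1 + ω²r(s)²)` is constant on `I`. -/
theorem stmt_1 (ω : ℝ) (I : Set ℝ) (hI : Convex ℝ I)
    (r S r' S' : ℝ → ℝ)
    (hr : ∀ s ∈ I, HasDerivAt r (r' s) s)
    (hS : ∀ s ∈ I, HasDerivAt S (S' s) s)
    (hode : ∀ s ∈ I, r' s * S s + r s * (1 + ω ^ 2 * r s ^ 2) * S' s = 0) :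
    ∀ s ∈ I, ∀ t ∈ I,
      ω * r s * S s / Real.sqrt (1 + ω ^ 2 * r s ^ 2)
        = ω * r t * S t / Real.sqrt (1 + ω ^ 2 * r t ^ 2) := by
  intro s hs t ht
  have hstationary : ∀ x ∈ I, HasDerivWithinAt (rotationConstant ω r S) 0 I x := by
    intro x hx
    have hderiv := hasDerivAt_rotationConstant (ω := ω) (hr x hx) (hS x hx)
    rw [hode x hx, mul_zero, zero_div] at hderiv
    exact hderiv.hasDerivWithinAt
  have hbound := hI.norm_image_sub_le_of_norm_hasDerivWithin_le (C := 0) hstationary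
    (fun _ _ => norm_zero.le) ht hs
  rw [zero_mul, norm_le_zero_iff, sub_eq_zero] at hbound
  exact hbound
end

section
/- Let γ₀ ≠ 0 and ω ≠ 0 be real numbers, set β := 1/(1 + γ₀²) and γ² := (1 + γ₀²)/γ₀², and define r : ℝ → ℝ by r(s) := √(γ₀² + β ω² s²)/|ω|. Then r is differentiable and satisfies the shape equation ω² r(s)² · (γ² (1 − r'(s)²) − 1) = 1 for all s ∈ ℝ. -/
open Real

section SqrtQuadratic

variable {a b c s : ℝ}

theorem hasDerivAt_sqrt_quadratic_div (h : 0 < a + b * s ^ 2) :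
    HasDerivAt (fun s => √(a + b * s ^ 2) / c) (b * s / (c * √(a + b * s ^ 2))) s := by
  have hq : HasDerivAt (fun s => a + b * s ^ 2) (b * (2 * s)) s := by
    simpa using ((hasDerivAt_pow 2 s).const_mul b).const_add a
  refine ((hq.sqrt h.ne').div_const c).congr_deriv ?_
  have : √(a + b * s ^ 2) ≠ 0 := (sqrt_pos.mpr h).ne'
  field_simp

theorem sq_sqrt_quadratic_div_mul_sq_deriv (hc : c ≠ 0) (h : 0 < a + b * s ^ 2) :
    (√(a + b * s ^ 2) / c) ^ 2 * (b * s / (c * √(a + b * s ^ 2))) ^ 2 = (b * s / c ^ 2) ^ 2 := by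
  have : √(a + b * s ^ 2) ≠ 0 := (sqrt_pos.mpr h).ne'
  field_simp

end SqrtQuadratic

/-- With `x = r(s)²` and `y = r'(s)²`, the relations `ω²r² = γ₀² + βω²s²` and `r r' = βs` reduce
the shape equation to `β(1 + γ₀²) = 1`. -/
theorem shape_eq_of_sq {γ₀ ω β x y s : ℝ} (hγ₀ : γ₀ ≠ 0) (hβ : β * (1 + γ₀ ^ 2) = 1)
    (hx : ω ^ 2 * x = γ₀ ^ 2 + β * ω ^ 2 * s ^ 2) (hxy : x * y = (β * s) ^ 2) :
    ω ^ 2 * x * ((1 + γ₀ ^ 2) / γ₀ ^ 2 * (1 - y) - 1) = 1 := by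
  field_simp
  linear_combination hx - (1 + γ₀ ^ 2) * ω ^ 2 * hxy - β * ω ^ 2 * s ^ 2 * hβ

/-- The explicit radius `r(s) = √(γ₀² + βω²s²)/|ω|`, `β = 1/(1+γ₀²)`, is
differentiable and satisfies the shape equation
`ω²r²(γ²(1 − r'²) − 1) = 1` with `γ² = (1+γ₀²)/γ₀²`. -/
theorem stmt_2 (γ₀ ω : ℝ) (hγ₀ : γ₀ ≠ 0) (hω : ω ≠ 0)
    (β : ℝ) (hβ : β = 1 / (1 + γ₀ ^ 2))
    (r : ℝ → ℝ)
    (hr : r = fun s => Real.sqrt (γ₀ ^ 2 + β * ω ^ 2 * s ^ 2) / |ω|) :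
    Differentiable ℝ r ∧
      ∀ s : ℝ,
        ω ^ 2 * r s ^ 2 * ((1 + γ₀ ^ 2) / γ₀ ^ 2 * (1 - deriv r s ^ 2) - 1) = 1 := by
  subst hr
  have hβ' : β * (1 + γ₀ ^ 2) = 1 := by rw [hβ]; field_simp
  have hpos (s : ℝ) : 0 < γ₀ ^ 2 + β * ω ^ 2 * s ^ 2 := by
    have : 0 ≤ β := by rw [hβ]; positivity
    positivity
  have hderiv (s : ℝ) := hasDerivAt_sqrt_quadratic_div (c := |ω|) (hpos s)
  refine ⟨fun s => (hderiv s).differentiableAt, fun s => ?_⟩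
  rw [(hderiv s).deriv]
  apply shape_eq_of_sq (s := s) hγ₀ hβ'
  · beta_reduce
    rw [div_pow, sq_sqrt (hpos s).le, sq_abs]
    field_simp
  · beta_reduce
    rw [sq_sqrt_quadratic_div_mul_sq_deriv (abs_ne_zero.mpr hω) (hpos s), sq_abs]
    field_simp
end

section
/- Let γ, ω be real numbers with γ ≠ 0 and ω ≠ 0, let I be an interval containing 0, and let r : I → ℝ be a twice differentiable positive function satisfying γ²(1 − r'(s)²) = 1/(ω²r(s)²) + 1 on I, with r'(0) = 0 and r'(s) ≠ 0 for all s ∈ I \ {0}. Then r(s)·r'(s) = β·s and r(s)² = r(0)² + β s² for all s ∈ I, where β := 1 − 1/γ². -/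
/-!
The shape equation rearranges to `r'² = β - c / r²` with `c = 1 / (γ²ω²)`. Differentiating this
identity along `I` gives `2 r' (r'' - c / r³) = 0`, so wherever `r' ≠ 0` we have `r r'' = c / r²`
and hence `(r r')' = r'² + r r'' = β`. A continuous function on an interval whose derivative
vanishes off a single point is constant, so `r r' - β s` vanishes on `I` (it does at `0` since
`r'(0) = 0`). Then `(r² - β s²)' = 2 (r r' - β s) = 0` gives the second identity.
-/

open Set

theorem HasDerivAt.eq_zero_of_eqOn_zero {E : Type*} [NormedAddCommGroup E] [NormedSpace ℝ E]
    {F : ℝ → E} {F' : E} {s : Set ℝ} {a x : ℝ}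
    (h : HasDerivAt F F' x) (hs : s.OrdConnected) (ha : a ∈ s) (hx : x ∈ s) (hax : a ≠ x)
    (hF : EqOn F 0 s) : F' = 0 :=
  have huniq : UniqueDiffWithinAt ℝ s x :=
    (uniqueDiffOn_uIcc hax x right_mem_uIcc).mono (hs.uIcc_subset ha hx)
  huniq.eq_deriv _ h.hasDerivWithinAt ((hasDerivWithinAt_const x s 0).congr_of_mem hF hx)

theorem Set.OrdConnected.eq_of_hasDerivAt_zero_of_ne {f : ℝ → ℝ} {s : Set ℝ} {a : ℝ}
    (hs : s.OrdConnected) (ha : a ∈ s) (hf : ContinuousOn f s)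
    (hf' : ∀ x ∈ s, x ≠ a → HasDerivAt f 0 x) : ∀ x ∈ s, f x = f a := by
  have hsegment : ∀ {u v}, u ∈ s → v ∈ s → u < v → a ∉ Ioo u v → f u = f v := by
    intro u v hu hv huv hau
    obtain ⟨c, -, hslope⟩ := exists_hasDerivAt_eq_slope f (fun _ => 0) huv
      (hf.mono (hs.out hu hv))
      fun y hy => hf' y (hs.out hu hv (Ioo_subset_Icc_self hy)) fun hya => hau (hya ▸ hy)
    rw [eq_div_iff (sub_ne_zero.2 huv.ne'), zero_mul] at hslope
    linarith
  intro x hx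
  rcases lt_trichotomy x a with hxa | rfl | hax
  · exact hsegment hx ha hxa fun h => h.2.false
  · rfl
  · exact (hsegment ha hx hax fun h => h.1.false).symm

theorem sq_eq_of_shape {γ ω ρ v : ℝ} (hγ : γ ≠ 0)
    (h : γ ^ 2 * (1 - v ^ 2) = 1 / (ω ^ 2 * ρ ^ 2) + 1) :
    v ^ 2 = (1 - 1 / γ ^ 2) - 1 / (γ ^ 2 * ω ^ 2) / ρ ^ 2 := by
  rw [div_div, mul_assoc, div_mul_eq_div_div_swap, eq_sub_of_add_eq h.symm]
  field_simp
  ring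

section ShapeODE

variable {I : Set ℝ} {r r' r'' : ℝ → ℝ} {β c a s : ℝ}

theorem mul_second_deriv_eq_of_sq_deriv_eq (hI : I.OrdConnected) (ha : a ∈ I) (hs : s ∈ I)
    (has : a ≠ s) (hsq : ∀ x ∈ I, r' x ^ 2 = β - c / r x ^ 2) (hr : r s ≠ 0)
    (hr' : r' s ≠ 0) (hd1 : HasDerivAt r (r' s) s) (hd2 : HasDerivAt r' (r'' s) s) :
    r s * r'' s = c / r s ^ 2 := by
  have hderiv := (hd2.fun_pow 2).fun_sub ((hasDerivAt_const s β).fun_sub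
    ((hasDerivAt_const s c).fun_div (hd1.fun_pow 2) (pow_ne_zero 2 hr)))
  have hzero := hderiv.eq_zero_of_eqOn_zero hI ha hs has fun x hx => sub_eq_zero.2 (hsq x hx)
  norm_num at hzero
  field_simp at hzero ⊢
  rw [mul_zero, mul_eq_zero, or_iff_right (mul_ne_zero two_ne_zero hr')] at hzero
  linarith

theorem hasDerivAt_mul_deriv_of_sq_deriv_eq (hI : I.OrdConnected) (ha : a ∈ I) (hs : s ∈ I)
    (has : a ≠ s) (hsq : ∀ x ∈ I, r' x ^ 2 = β - c / r x ^ 2) (hr : r s ≠ 0)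
    (hr' : r' s ≠ 0) (hd1 : HasDerivAt r (r' s) s) (hd2 : HasDerivAt r' (r'' s) s) :
    HasDerivAt (fun x => r x * r' x) β s := by
  refine (hd1.fun_mul hd2).congr_deriv ?_
  rw [← sq, hsq s hs, mul_second_deriv_eq_of_sq_deriv_eq hI ha hs has hsq hr hr' hd1 hd2]
  ring

end ShapeODE

theorem stmt_4_general (γ ω : ℝ) (hγ : γ ≠ 0)
    (I : Set ℝ) (hI : Convex ℝ I) (h0 : (0 : ℝ) ∈ I)
    (r r' r'' : ℝ → ℝ)
    (hrpos : ∀ s ∈ I, 0 < r s)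
    (hd1 : ∀ s ∈ I, HasDerivAt r (r' s) s)
    (hd2 : ∀ s ∈ I, HasDerivAt r' (r'' s) s)
    (hshape : ∀ s ∈ I, γ ^ 2 * (1 - r' s ^ 2) = 1 / (ω ^ 2 * r s ^ 2) + 1)
    (hr'0 : r' 0 = 0)
    (hr'ne : ∀ s ∈ I \ {(0 : ℝ)}, r' s ≠ 0) :
    ∀ s ∈ I,
      r s * r' s = (1 - 1 / γ ^ 2) * s ∧
      r s ^ 2 = r 0 ^ 2 + (1 - 1 / γ ^ 2) * s ^ 2 := by
  set β := 1 - 1 / γ ^ 2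
  have hsq : ∀ x ∈ I, r' x ^ 2 = β - 1 / (γ ^ 2 * ω ^ 2) / r x ^ 2 :=
    fun x hx => sq_eq_of_shape hγ (hshape x hx)
  have hrr' : ∀ s ∈ I, r s * r' s = β * s := by
    have hconst := hI.ordConnected.eq_of_hasDerivAt_zero_of_ne h0
      (f := fun x => r x * r' x - β * x)
      (fun x hx => (((hd1 x hx).continuousAt.mul (hd2 x hx).continuousAt).sub
        (continuousAt_id.const_mul β)).continuousWithinAt)
      fun x hx hx0 => by
        simpa using (hasDerivAt_mul_deriv_of_sq_deriv_eq hI.ordConnected h0 hx (Ne.symm hx0) hsq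
          (hrpos x hx).ne' (hr'ne x ⟨hx, hx0⟩) (hd1 x hx) (hd2 x hx)).fun_sub
          ((hasDerivAt_id x).const_mul β)
    intro s hs
    simpa [hr'0, sub_eq_zero] using hconst s hs
  have hsq_sub : ∀ s ∈ I, r s ^ 2 - β * s ^ 2 = r 0 ^ 2 := by
    have hderiv : ∀ x ∈ I, HasDerivAt (fun x => r x ^ 2 - β * x ^ 2) 0 x := fun x hx => by
      refine ((hd1 x hx).fun_pow 2).fun_sub ((hasDerivAt_pow 2 x).const_mul β) |>.congr_deriv ?_
      linear_combination 2 * hrr' x hx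
    intro s hs
    simpa using hI.ordConnected.eq_of_hasDerivAt_zero_of_ne h0
      (fun x hx => (hderiv x hx).continuousAt.continuousWithinAt) (fun x hx _ => hderiv x hx) s hs
  exact fun s hs => ⟨hrr' s hs, by linear_combination hsq_sub s hs⟩

/-- Integrating the shape equation `γ²(1 − r'²) = 1/(ω²r²) + 1` with
`r'(0) = 0` and `r' ≠ 0` away from `0` gives `r·r' = β·s` and
`r² = r(0)² + βs²`, where `β = 1 − 1/γ²`. -/
theorem stmt_4 (γ ω : ℝ) (hγ : γ ≠ 0) (hω : ω ≠ 0)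
    (I : Set ℝ) (hI : Convex ℝ I) (h0 : (0 : ℝ) ∈ I)
    (r r' r'' : ℝ → ℝ)
    (hrpos : ∀ s ∈ I, 0 < r s)
    (hd1 : ∀ s ∈ I, HasDerivAt r (r' s) s)
    (hd2 : ∀ s ∈ I, HasDerivAt r' (r'' s) s)
    (hshape : ∀ s ∈ I, γ ^ 2 * (1 - r' s ^ 2) = 1 / (ω ^ 2 * r s ^ 2) + 1)
    (hr'0 : r' 0 = 0)
    (hr'ne : ∀ s ∈ I \ {(0 : ℝ)}, r' s ≠ 0) :
    ∀ s ∈ I,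
      r s * r' s = (1 - 1 / γ ^ 2) * s ∧
      r s ^ 2 = r 0 ^ 2 + (1 - 1 / γ ^ 2) * s ^ 2 :=
  stmt_4_general γ ω hγ I hI h0 r r' r'' hrpos hd1 hd2 hshape hr'0 hr'ne
end

section
/- Let γ₀ ∈ ℝ, let R(θ) denote the rotation matrix ((cos θ, −sin θ), (sin θ, cos θ)), and define v : ℝ → ℝ² by v(η) := R(γ₀η)·(sinh η, −γ₀ cosh η). Then for all η: ‖v'(η)‖² = (γ₀² + 1)(‖v(η)‖² + 1), v(η) × v'(η) = γ₀(‖v(η)‖² + 1) (where w × z := w₁z₂ − w₂z₁), and consequently the shape equation (γ₀² + 1)(v × v')² = γ₀²‖v'‖²(1 + ‖v‖²) holds. -/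
/-!
Write `v(η) = R(γη) w(η)` with `w(η) = (sinh η, -γ cosh η)`. Rotations preserve `‖·‖²` and the
cross product, and differentiating in the rotating frame gives `v' = R(γη)(w' + γ J w)` with `J`
the quarter turn, where `w' + γ J w = ((γ² + 1) cosh η, 0)`. Together with
`‖v‖² + 1 = (γ² + 1) cosh² η` all three identities become polynomial identities in `cosh η`.
-/

open Matrix Real

noncomputable def rotMatrix (θ : ℝ) : Matrix (Fin 2) (Fin 2) ℝ :=
  !![cos θ, -sin θ; sin θ, cos θ]

@[simp] lemma rotMatrix_mulVec_zero (θ : ℝ) (w : Fin 2 → ℝ) :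
    (rotMatrix θ *ᵥ w) 0 = cos θ * w 0 - sin θ * w 1 := by
  simp [rotMatrix, mulVec, dotProduct, Fin.sum_univ_two]; ring

@[simp] lemma rotMatrix_mulVec_one (θ : ℝ) (w : Fin 2 → ℝ) :
    (rotMatrix θ *ᵥ w) 1 = sin θ * w 0 + cos θ * w 1 := by
  simp [rotMatrix, mulVec, dotProduct, Fin.sum_univ_two]

lemma sq_add_sq_rotMatrix_mulVec (θ : ℝ) (w : Fin 2 → ℝ) :
    (rotMatrix θ *ᵥ w) 0 ^ 2 + (rotMatrix θ *ᵥ w) 1 ^ 2 = w 0 ^ 2 + w 1 ^ 2 := by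
  simp only [rotMatrix_mulVec_zero, rotMatrix_mulVec_one]
  linear_combination (w 0 ^ 2 + w 1 ^ 2) * sin_sq_add_cos_sq θ

lemma cross_rotMatrix_mulVec (θ : ℝ) (w z : Fin 2 → ℝ) :
    (rotMatrix θ *ᵥ w) 0 * (rotMatrix θ *ᵥ z) 1 - (rotMatrix θ *ᵥ w) 1 * (rotMatrix θ *ᵥ z) 0
      = w 0 * z 1 - w 1 * z 0 := by
  simp only [rotMatrix_mulVec_zero, rotMatrix_mulVec_one]
  linear_combination (w 0 * z 1 - w 1 * z 0) * sin_sq_add_cos_sq θ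

/-- Here `![-w t 1, w t 0]` is the quarter turn `J w`. -/
lemma HasDerivAt.rotMatrix_mulVec {ω t : ℝ} {w : ℝ → Fin 2 → ℝ} {w' : Fin 2 → ℝ}
    (hw : HasDerivAt w w' t) :
    HasDerivAt (fun s => rotMatrix (ω * s) *ᵥ w s)
      (rotMatrix (ω * t) *ᵥ (w' + ω • ![-w t 1, w t 0])) t := by
  have hθ : HasDerivAt (fun s => ω * s) ω t := by simpa using (hasDerivAt_id t).const_mul ω
  have hc := (hasDerivAt_cos (ω * t)).comp t hθ
  have hs := (hasDerivAt_sin (ω * t)).comp t hθ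
  have h0 := hasDerivAt_pi.1 hw 0
  have h1 := hasDerivAt_pi.1 hw 1
  refine hasDerivAt_pi.2 (Fin.forall_fin_two.2 ⟨?_, ?_⟩)
  · simp only [rotMatrix_mulVec_zero]
    refine ((hc.mul h0).sub (hs.mul h1)).congr_deriv ?_
    simp only [Pi.add_apply, Pi.smul_apply, smul_eq_mul, Function.comp_apply,
      cons_val_zero, cons_val_one]
    ring
  · simp only [rotMatrix_mulVec_one]
    refine ((hs.mul h0).add (hc.mul h1)).congr_deriv ?_
    simp only [Pi.add_apply, Pi.smul_apply, smul_eq_mul, Function.comp_apply,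
      cons_val_zero, cons_val_one]
    ring

lemma hasDerivAt_vec_sinh_neg_mul_cosh (γ t : ℝ) :
    HasDerivAt (fun s => ![sinh s, -γ * cosh s]) ![cosh t, -γ * sinh t] t := by
  refine hasDerivAt_pi.2 (Fin.forall_fin_two.2 ⟨?_, ?_⟩)
  · simpa using hasDerivAt_sinh t
  · simpa using (hasDerivAt_cosh t).const_mul (-γ)

noncomputable def screwProfile (γ η : ℝ) : Fin 2 → ℝ :=
  rotMatrix (γ * η) *ᵥ ![sinh η, -γ * cosh η]

lemma screwProfile_sq_add_sq_add_one (γ η : ℝ) :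
    screwProfile γ η 0 ^ 2 + screwProfile γ η 1 ^ 2 + 1 = (γ ^ 2 + 1) * cosh η ^ 2 := by
  rw [screwProfile, sq_add_sq_rotMatrix_mulVec]
  simp only [cons_val_zero, cons_val_one]
  linear_combination -cosh_sq_sub_sinh_sq η

lemma hasDerivAt_screwProfile (γ t : ℝ) :
    HasDerivAt (screwProfile γ) (rotMatrix (γ * t) *ᵥ ![(γ ^ 2 + 1) * cosh t, 0]) t := by
  refine (hasDerivAt_vec_sinh_neg_mul_cosh γ t).rotMatrix_mulVec.congr_deriv ?_
  congr 1
  ext i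
  fin_cases i
  · simp only [Fin.zero_eta, Pi.add_apply, Pi.smul_apply, smul_eq_mul, cons_val_zero, cons_val_one,
      cons_val_fin_one]
    ring
  · simp only [Fin.mk_one, Pi.add_apply, Pi.smul_apply, smul_eq_mul, cons_val_zero, cons_val_one,
      cons_val_fin_one]
    ring

/-- The profile curve `v(η) = R(γ₀η)·(sinh η, −γ₀ cosh η)` satisfies
`‖v'‖² = (γ₀²+1)(‖v‖²+1)`, `v × v' = γ₀(‖v‖²+1)`, and hence the shape
equation `(γ₀²+1)(v × v')² = γ₀²‖v'‖²(1+‖v‖²)`. -/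
theorem stmt_10 (γ₀ : ℝ)
    (v : ℝ → Fin 2 → ℝ)
    (hv : v = fun η =>
      Matrix.mulVec
        !![Real.cos (γ₀ * η), -Real.sin (γ₀ * η);
           Real.sin (γ₀ * η),  Real.cos (γ₀ * η)]
        ![Real.sinh η, -γ₀ * Real.cosh η])
    (v' : ℝ → Fin 2 → ℝ)
    (hv' : v' = fun η i => deriv (fun t => v t i) η) :
    ∀ η : ℝ,
      v' η 0 ^ 2 + v' η 1 ^ 2 = (γ₀ ^ 2 + 1) * ((v η 0 ^ 2 + v η 1 ^ 2) + 1) ∧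
      v η 0 * v' η 1 - v η 1 * v' η 0 = γ₀ * ((v η 0 ^ 2 + v η 1 ^ 2) + 1) ∧
      (γ₀ ^ 2 + 1) * (v η 0 * v' η 1 - v η 1 * v' η 0) ^ 2
        = γ₀ ^ 2 * (v' η 0 ^ 2 + v' η 1 ^ 2) * (1 + (v η 0 ^ 2 + v η 1 ^ 2)) := by
  intro η
  replace hv : v = screwProfile γ₀ := hv
  have hvel : v' η = rotMatrix (γ₀ * η) *ᵥ ![(γ₀ ^ 2 + 1) * cosh η, 0] := by
    subst hv hv'
    ext i
    exact (hasDerivAt_pi.1 (hasDerivAt_screwProfile γ₀ η) i).deriv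
  have hsize := screwProfile_sq_add_sq_add_one γ₀ η
  rw [← hv] at hsize
  have hspeed : v' η 0 ^ 2 + v' η 1 ^ 2 = ((γ₀ ^ 2 + 1) * cosh η) ^ 2 := by
    rw [hvel, sq_add_sq_rotMatrix_mulVec]
    simp only [cons_val_zero, cons_val_one, cons_val_fin_one]
    ring
  have hcross : v η 0 * v' η 1 - v η 1 * v' η 0 = γ₀ * (γ₀ ^ 2 + 1) * cosh η ^ 2 := by
    rw [hv, hvel, screwProfile, cross_rotMatrix_mulVec]
    simp only [cons_val_zero, cons_val_one, cons_val_fin_one]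
    ring
  have hconf : v' η 0 ^ 2 + v' η 1 ^ 2 = (γ₀ ^ 2 + 1) * ((v η 0 ^ 2 + v η 1 ^ 2) + 1) := by
    rw [hspeed, hsize]; ring
  have hrot : v η 0 * v' η 1 - v η 1 * v' η 0 = γ₀ * ((v η 0 ^ 2 + v η 1 ^ 2) + 1) := by
    rw [hcross, hsize]; ring
  refine ⟨hconf, hrot, ?_⟩
  rw [hconf, hrot]
  ring
end

section
/- Let γ₀ > 0, ω > 0, set β := 1/(1 + γ₀²), μ := βω, κ₀ := γ₀ωβ, and r(s) := √(γ₀² + βω²s²)/ω. Then for all s ∈ ℝ: ω²·r(s)·√(1 − r'(s)²) = (1 + ω²r(s)²)·κ₀/√(1 + μ²s²). -/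
/-!
Write `A = γ₀² + βω²s²`, so `r = √A / ω` and `r' = βωs / √A`. Since `β(1 + γ₀²) = 1`,
`A - (βωs)² = γ₀² (1 + μ²s²)` and `β (1 + A) = 1 + μ²s²`; hence both sides equal
`γ₀ ω √(1 + μ²s²)`.
-/

open Real

theorem hasDerivAt_sqrt_add_mul_sq_div {a c : ℝ} (ω : ℝ) {s : ℝ} (h : a + c * s ^ 2 ≠ 0) :
    HasDerivAt (fun t => √(a + c * t ^ 2) / ω) (c * s / (ω * √(a + c * s ^ 2))) s := by
  have hq : HasDerivAt (fun t => a + c * t ^ 2) (c * (2 * s)) s := by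
    simpa using ((hasDerivAt_pow 2 s).const_mul c).const_add a
  refine ((hq.sqrt h).div_const ω).congr_deriv ?_
  field_simp

section ScherkProfile

variable {γ₀ ω β s : ℝ}

theorem one_sub_slope_sq (hβ : β * (1 + γ₀ ^ 2) = 1) (hA : 0 < γ₀ ^ 2 + β * ω ^ 2 * s ^ 2) :
    1 - (β * ω * s / √(γ₀ ^ 2 + β * ω ^ 2 * s ^ 2)) ^ 2
      = (γ₀ * √(1 + (β * ω) ^ 2 * s ^ 2) / √(γ₀ ^ 2 + β * ω ^ 2 * s ^ 2)) ^ 2 := by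
  rw [div_pow, div_pow, mul_pow γ₀, sq_sqrt hA.le, sq_sqrt (by positivity)]
  field_simp
  linear_combination (-(β * ω ^ 2 * s ^ 2)) * hβ

theorem one_add_radicand (hβ : β * (1 + γ₀ ^ 2) = 1) :
    β * (1 + (γ₀ ^ 2 + β * ω ^ 2 * s ^ 2)) = 1 + (β * ω) ^ 2 * s ^ 2 := by
  linear_combination hβ

end ScherkProfile

/-- The vanishing-mean-curvature identity `ω²r√(1 − r'²) = (1 + ω²r²)·κ` for
the arclength-parametrized profile curve, with curvature
`κ(s) = κ₀/√(1 + μ²s²)`, `κ₀ = γ₀ωβ`, `μ = βω`, `β = 1/(1+γ₀²)`. -/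
theorem stmt_15 (γ₀ ω : ℝ) (hγ₀ : 0 < γ₀) (hω : 0 < ω)
    (β μ κ₀ : ℝ) (hβ : β = 1 / (1 + γ₀ ^ 2)) (hμ : μ = β * ω) (hκ₀ : κ₀ = γ₀ * ω * β)
    (r : ℝ → ℝ) (hr : r = fun s => Real.sqrt (γ₀ ^ 2 + β * ω ^ 2 * s ^ 2) / ω) :
    ∀ s : ℝ,
      ω ^ 2 * r s * Real.sqrt (1 - deriv r s ^ 2)
        = (1 + ω ^ 2 * r s ^ 2) * κ₀ / Real.sqrt (1 + μ ^ 2 * s ^ 2) := by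
  intro s
  have hβ1 : β * (1 + γ₀ ^ 2) = 1 := by rw [hβ]; field_simp
  have hA : 0 < γ₀ ^ 2 + β * ω ^ 2 * s ^ 2 := by rw [hβ]; positivity
  have hB : 0 < 1 + μ ^ 2 * s ^ 2 := by positivity
  have hderiv : deriv r s = β * ω * s / √(γ₀ ^ 2 + β * ω ^ 2 * s ^ 2) := by
    rw [hr, (hasDerivAt_sqrt_add_mul_sq_div ω hA.ne').deriv]
    field_simp
  have hslope : √(1 - deriv r s ^ 2)
      = γ₀ * √(1 + μ ^ 2 * s ^ 2) / √(γ₀ ^ 2 + β * ω ^ 2 * s ^ 2) := by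
    rw [hderiv, one_sub_slope_sq hβ1 hA, sqrt_sq (by positivity), hμ]
  have hcurv : β * (1 + ω ^ 2 * r s ^ 2) = 1 + μ ^ 2 * s ^ 2 := by
    rw [hr, div_pow, sq_sqrt hA.le, mul_div_cancel₀ _ (by positivity), hμ, one_add_radicand hβ1]
  set A := γ₀ ^ 2 + β * ω ^ 2 * s ^ 2
  have hrs : r s = √A / ω := congrFun hr s
  calc ω ^ 2 * r s * √(1 - deriv r s ^ 2) = γ₀ * ω * √(1 + μ ^ 2 * s ^ 2) := by
        rw [hslope, hrs]
        field_simp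
    _ = (1 + ω ^ 2 * r s ^ 2) * κ₀ / √(1 + μ ^ 2 * s ^ 2) := by
        rw [hκ₀, show (1 + ω ^ 2 * r s ^ 2) * (γ₀ * ω * β)
          = γ₀ * ω * (β * (1 + ω ^ 2 * r s ^ 2)) by ring, hcurv]
        field_simp
        rw [sq_sqrt hB.le]
end

section
/- Let γ₀ ≠ 0 and define w(ψ) := γ₀² cosh²ψ + sinh²ψ. Then for all ψ > 0: (γ₀/2)·(w'(ψ)/w(ψ))·√((w(ψ) + 1)/(w(ψ) − γ₀²)) = γ₀(1 + γ₀²)/(γ₀² + tanh²ψ), and the function ψ ↦ γ₀ψ − arctan(γ₀ coth ψ) is an antiderivative of ψ ↦ γ₀(1 + γ₀²)/(γ₀² + tanh²ψ) on (0, ∞). -/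
/-!
With `w = γ₀² cosh² ψ + sinh² ψ` one has `w + 1 = (1 + γ₀²) cosh² ψ`,
`w - γ₀² = (1 + γ₀²) sinh² ψ` and `w' = 2 (1 + γ₀²) sinh ψ cosh ψ`, so the square root is `coth ψ`
and the integrand collapses to `γ₀ (1 + γ₀²) cosh² ψ / w`. The derivative of
`γ₀ ψ - arctan (γ₀ coth ψ)` is `γ₀ + γ₀ / (sinh² ψ + γ₀² cosh² ψ) = γ₀ (w + 1) / w`, the same
expression.
-/

open Real

lemma hasDerivAt_mul_cosh_sq_add_sinh_sq (a x : ℝ) :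
    HasDerivAt (fun t => a * cosh t ^ 2 + sinh t ^ 2)
      (2 * (1 + a) * (sinh x * cosh x)) x := by
  refine ((((hasDerivAt_cosh x).pow 2).const_mul a).add ((hasDerivAt_sinh x).pow 2)).congr_deriv ?_
  ring

lemma hasDerivAt_cosh_div_sinh {x : ℝ} (hx : x ≠ 0) :
    HasDerivAt (fun t => cosh t / sinh t) (-(1 / sinh x ^ 2)) x := by
  have hs : sinh x ≠ 0 := sinh_ne_zero.mpr hx
  refine ((hasDerivAt_cosh x).div (hasDerivAt_sinh x) hs).congr_deriv ?_
  field_simp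
  linear_combination -cosh_sq_sub_sinh_sq x

lemma mul_cosh_sq_add_sinh_sq_add_one (a x : ℝ) :
    a * cosh x ^ 2 + sinh x ^ 2 + 1 = (1 + a) * cosh x ^ 2 := by
  linear_combination -cosh_sq_sub_sinh_sq x

lemma mul_cosh_sq_add_sinh_sq_sub (a x : ℝ) :
    a * cosh x ^ 2 + sinh x ^ 2 - a = (1 + a) * sinh x ^ 2 := by
  linear_combination a * cosh_sq_sub_sinh_sq x

lemma div_add_tanh_sq (a c x : ℝ) :
    c / (a + tanh x ^ 2) = c * cosh x ^ 2 / (a * cosh x ^ 2 + sinh x ^ 2) := by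
  have hc : cosh x ^ 2 ≠ 0 := pow_ne_zero 2 (cosh_pos x).ne'
  rw [tanh_eq_sinh_div_cosh, div_pow, ← mul_div_mul_right c _ hc, add_mul,
    div_mul_cancel₀ _ hc]

theorem stmt_18_general (γ₀ : ℝ)
    (w : ℝ → ℝ) (hw : w = fun ψ => γ₀ ^ 2 * Real.cosh ψ ^ 2 + Real.sinh ψ ^ 2) :
    (∀ ψ : ℝ, 0 < ψ →
      γ₀ / 2 * (deriv w ψ / w ψ)
          * Real.sqrt ((w ψ + 1) / (w ψ - γ₀ ^ 2))
        = γ₀ * (1 + γ₀ ^ 2) / (γ₀ ^ 2 + Real.tanh ψ ^ 2)) ∧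
    ∀ ψ : ℝ, 0 < ψ →
      HasDerivAt (fun t => γ₀ * t - Real.arctan (γ₀ * (Real.cosh t / Real.sinh t)))
        (γ₀ * (1 + γ₀ ^ 2) / (γ₀ ^ 2 + Real.tanh ψ ^ 2)) ψ := by
  subst hw
  refine ⟨fun ψ hψ => ?_, fun ψ hψ => ?_⟩
  · have hs : 0 < sinh ψ := sinh_pos_iff.mpr hψ
    have hsqrt : √((γ₀ ^ 2 * cosh ψ ^ 2 + sinh ψ ^ 2 + 1) /
        (γ₀ ^ 2 * cosh ψ ^ 2 + sinh ψ ^ 2 - γ₀ ^ 2)) = cosh ψ / sinh ψ := by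
      rw [mul_cosh_sq_add_sinh_sq_add_one, mul_cosh_sq_add_sinh_sq_sub,
        mul_div_mul_left _ _ (by positivity), ← div_pow, sqrt_sq (by positivity)]
    rw [(hasDerivAt_mul_cosh_sq_add_sinh_sq _ ψ).deriv, hsqrt, div_add_tanh_sq]
    field_simp
  · have hs : sinh ψ ≠ 0 := (sinh_pos_iff.mpr hψ).ne'
    have hcoth := ((hasDerivAt_cosh_div_sinh hψ.ne').const_mul γ₀).arctan
    refine (((hasDerivAt_id ψ).const_mul γ₀).sub hcoth).congr_deriv ?_
    rw [div_add_tanh_sq]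
    field_simp
    linear_combination -(γ₀ * (γ₀ ^ 2 * cosh ψ ^ 2 + sinh ψ ^ 2)) * cosh_sq_sub_sinh_sq ψ

/-- Evaluation of the integral for the polar angle via the substitution
`w = γ₀²cosh²ψ + sinh²ψ`: the integrand equals `γ₀(1+γ₀²)/(γ₀² + tanh²ψ)`,
whose antiderivative on `(0,∞)` is `γ₀ψ − arctan(γ₀ coth ψ)`. -/
theorem stmt_18 (γ₀ : ℝ) (hγ₀ : γ₀ ≠ 0)
    (w : ℝ → ℝ) (hw : w = fun ψ => γ₀ ^ 2 * Real.cosh ψ ^ 2 + Real.sinh ψ ^ 2) :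
    (∀ ψ : ℝ, 0 < ψ →
      γ₀ / 2 * (deriv w ψ / w ψ)
          * Real.sqrt ((w ψ + 1) / (w ψ - γ₀ ^ 2))
        = γ₀ * (1 + γ₀ ^ 2) / (γ₀ ^ 2 + Real.tanh ψ ^ 2)) ∧
    ∀ ψ : ℝ, 0 < ψ →
      HasDerivAt (fun t => γ₀ * t - Real.arctan (γ₀ * (Real.cosh t / Real.sinh t)))
        (γ₀ * (1 + γ₀ ^ 2) / (γ₀ ^ 2 + Real.tanh ψ ^ 2)) ψ :=
  stmt_18_general γ₀ w hw
end
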